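/- Let X be a compact metric space and fₙ Γ-converge to f on X. Assume M₁(f) = {x¹} is a singleton, each fₙ has nonempty first and second argmin sets M₁(fₙ), M₂(fₙ), and there is β > 0 with d(M₁(fₙ), M₂(fₙ)) > β for all n. Then any limit point of a sequence xₙ² ∈ M₂(fₙ) belongs to M₂(f); in particular M₂(f) is nonempty. -/

import Mathlib

open Filter

/-- Auxiliary recursion computing, for `k = 0, 1, 2, …` (so that index `k` corresponds to
the `(k+1)`-th argmin of the paper), the triple
`(m_{k+1}(f), M_{k+1}(f), M_1(f) ∪ ⋯ ∪ M_{k+1}(f))`. -/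
noncomputable def argminAux {X : Type*} [MetricSpace X] (f : X → EReal) :
    ℕ → EReal × Set X × Set X
  | 0 => ⟨⨅ x, f x, {x | f x = ⨅ y, f y}, {x | f x = ⨅ y, f y}⟩
  | (k + 1) =>
      let p := argminAux f k
      let m' : EReal := ⨅ x : ↥(p.2.2ᶜ), f x
      let M' : Set X := {x | p.1 < f x ∧ f x = m'}
      ⟨m', M', p.2.2 ∪ M'⟩

/-- `m_k(f)` for `k ≥ 1`: the value of the `k`-th smallest "level" of `f`. -/
noncomputable def mVal {X : Type*} [MetricSpace X] (f : X → EReal) (k : ℕ) : EReal :=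
  (argminAux f (k - 1)).1

/-- `M_k(f)` for `k ≥ 1`: the set of `k`-th argmins of `f`. -/
noncomputable def MSet {X : Type*} [MetricSpace X] (f : X → EReal) (k : ℕ) : Set X :=
  (argminAux f (k - 1)).2.1

lemma MSet_one_eq {X : Type*} [MetricSpace X] (g : X → EReal) :
    MSet g 1 = {z | g z = ⨅ y, g y} := rfl

lemma MSet_two_eq {X : Type*} [MetricSpace X] (g : X → EReal) :
    MSet g 2 = {z | (⨅ y, g y) < g z ∧ g z = ⨅ w : ↥({z | g z = ⨅ y, g y}ᶜ), g w} := rfl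

/-- The liminf inequality of `Γ`-convergence holds along arbitrary strictly monotone
subsequences (by merging with a recovery sequence). -/
lemma gamma_liminf_subseq {X : Type*} [MetricSpace X]
    (f : ℕ → X → EReal) (flim : X → EReal)
    (hrecovery : ∀ x : X, ∃ xs : ℕ → X, Tendsto xs atTop (nhds x) ∧
      limsup (fun n => f n (xs n)) atTop ≤ flim x)
    (hliminf : ∀ (x : X) (xs : ℕ → X), Tendsto xs atTop (nhds x) →
      flim x ≤ liminf (fun n => f n (xs n)) atTop)
    (φ : ℕ → ℕ) (hφ : StrictMono φ) (x : X) (ws : ℕ → X)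
    (hws : Tendsto ws atTop (nhds x)) :
    flim x ≤ liminf (fun k => f (φ k) (ws k)) atTop := by
  classical
  obtain ⟨rs, hrst, -⟩ := hrecovery x
  set v : ℕ → X := fun n => if h : ∃ k, φ k = n then ws h.choose else rs n with hv
  have hvφ : ∀ k, v (φ k) = ws k := by
    intro k
    have h : ∃ j, φ j = φ k := ⟨k, rfl⟩
    have hk : h.choose = k := hφ.injective h.choose_spec
    simp only [hv, dif_pos h, hk]
  have hvt : Tendsto v atTop (nhds x) := by
    rw [Metric.tendsto_atTop] at hws hrst ⊢
    intro ε hε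
    obtain ⟨N1, h1⟩ := hws ε hε
    obtain ⟨N2, h2⟩ := hrst ε hε
    refine ⟨max (φ N1) N2, fun n hn => ?_⟩
    by_cases h : ∃ k, φ k = n
    · have hk : φ h.choose = n := h.choose_spec
      have hle : N1 ≤ h.choose := by
        have h' : φ N1 ≤ φ h.choose := by rw [hk]; exact le_trans (le_max_left _ _) hn
        exact hφ.le_iff_le.mp h'
      simpa only [hv, dif_pos h] using h1 _ hle
    · have hle : N2 ≤ n := le_trans (le_max_right _ _) hn
      simpa only [hv, dif_neg h] using h2 _ hle
  have step1 : flim x ≤ liminf (fun n => f n (v n)) atTop := hliminf x v hvt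
  have step2 : liminf (fun n => f n (v n)) atTop
      ≤ liminf (fun k => f (φ k) (v (φ k))) atTop := by
    rw [show (fun k => f (φ k) (v (φ k))) = (fun n => f n (v n)) ∘ φ from rfl, liminf_comp]
    exact liminf_le_liminf_of_le hφ.tendsto_atTop
  have step3 : (fun k => f (φ k) (v (φ k))) = fun k => f (φ k) (ws k) := by
    funext k; rw [hvφ]
  calc flim x ≤ liminf (fun n => f n (v n)) atTop := step1
    _ ≤ liminf (fun k => f (φ k) (v (φ k))) atTop := step2
    _ = liminf (fun k => f (φ k) (ws k)) atTop := by rw [step3]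

/-- The limsup of `f (φ k)` along a recovery sequence, taken along a subsequence, is still
bounded by `flim`. -/
lemma gamma_limsup_subseq {X : Type*} [MetricSpace X]
    (f : ℕ → X → EReal) (φ : ℕ → ℕ) (hφ : StrictMono φ) (ys : ℕ → X) :
    limsup (fun k => f (φ k) (ys (φ k))) atTop ≤ limsup (fun n => f n (ys n)) atTop := by
  rw [show (fun k => f (φ k) (ys (φ k))) = (fun n => f n (ys n)) ∘ φ from rfl, limsup_comp]
  exact limsup_le_limsup_of_le hφ.tendsto_atTop

/-- Along any strictly monotone subsequence, a convergent sequence of (first) minimizers of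
`f (φ k)` converges to the unique minimizer of the Γ-limit. -/
lemma limit_of_minimizers {X : Type*} [MetricSpace X]
    (f : ℕ → X → EReal) (flim : X → EReal)
    (hrecovery : ∀ x : X, ∃ xs : ℕ → X, Tendsto xs atTop (nhds x) ∧
      limsup (fun n => f n (xs n)) atTop ≤ flim x)
    (hliminf : ∀ (x : X) (xs : ℕ → X), Tendsto xs atTop (nhds x) →
      flim x ≤ liminf (fun n => f n (xs n)) atTop)
    (x1 : X) (hsingleton : MSet flim 1 = {x1})
    (φ : ℕ → ℕ) (hφ : StrictMono φ) (z : ℕ → X) (hz : ∀ k, z k ∈ MSet (f (φ k)) 1)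
    (y : X) (hy : Tendsto z atTop (nhds y)) : y = x1 := by
  have key : flim y = ⨅ w, flim w := by
    refine le_antisymm (le_iInf fun w => ?_) (iInf_le _ _)
    obtain ⟨ws, hwst, hwsl⟩ := hrecovery w
    have h2 : ∀ k, f (φ k) (z k) ≤ f (φ k) (ws (φ k)) := by
      intro k
      have hmem : f (φ k) (z k) = ⨅ u, f (φ k) u := by
        have := hz k; rw [MSet_one_eq] at this; exact this
      rw [hmem]; exact iInf_le _ _
    calc flim y ≤ liminf (fun k => f (φ k) (z k)) atTop :=
          gamma_liminf_subseq f flim hrecovery hliminf φ hφ y z hy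
      _ ≤ liminf (fun k => f (φ k) (ws (φ k))) atTop :=
          liminf_le_liminf (Eventually.of_forall h2)
      _ ≤ limsup (fun k => f (φ k) (ws (φ k))) atTop := liminf_le_limsup
      _ ≤ limsup (fun n => f n (ws n)) atTop := gamma_limsup_subseq f φ hφ ws
      _ ≤ flim w := hwsl
  have hmem : y ∈ MSet flim 1 := by rw [MSet_one_eq]; exact key
  rw [hsingleton] at hmem
  exact hmem

/-- on a compact metric space, if `fₙ` Γ-converges to `f`, `M₁(f)` is a
singleton `{x¹}`, each `fₙ` has nonempty first and second argmin sets at distance `> β > 0`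
from each other, then every limit point of second argmins `xₙ² ∈ M₂(fₙ)` lies in `M₂(f)`;
in particular `M₂(f)` is nonempty. -/
theorem stmt9 {X : Type*} [MetricSpace X] [CompactSpace X] [Nonempty X]
    (f : ℕ → X → EReal) (flim : X → EReal)
    (hbot : ∀ n x, f n x ≠ ⊥) (hbot' : ∀ x, flim x ≠ ⊥)
    (hrecovery : ∀ x : X, ∃ xs : ℕ → X, Tendsto xs atTop (nhds x) ∧
      limsup (fun n => f n (xs n)) atTop ≤ flim x)
    (hliminf : ∀ (x : X) (xs : ℕ → X), Tendsto xs atTop (nhds x) →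
      flim x ≤ liminf (fun n => f n (xs n)) atTop)
    (x1 : X) (hsingleton : MSet flim 1 = {x1})
    (hM1 : ∀ n, (MSet (f n) 1).Nonempty) (hM2 : ∀ n, (MSet (f n) 2).Nonempty)
    (β : ℝ) (hβ : 0 < β)
    (hsep : ∀ n, ∀ a ∈ MSet (f n) 1, ∀ b ∈ MSet (f n) 2, β < dist a b)
    (x2 : ℕ → X) (hx2 : ∀ n, x2 n ∈ MSet (f n) 2) :
    (∀ (φ : ℕ → ℕ), StrictMono φ → ∀ xlim : X,
        Tendsto (fun n => x2 (φ n)) atTop (nhds xlim) → xlim ∈ MSet flim 2) ∧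
      (MSet flim 2).Nonempty := by
  classical
  choose x1s hx1s using hM1
  have hset : {z | flim z = ⨅ y, flim y} = ({x1} : Set X) := by
    rw [← MSet_one_eq]; exact hsingleton
  have main : ∀ (φ : ℕ → ℕ), StrictMono φ → ∀ xlim : X,
      Tendsto (fun n => x2 (φ n)) atTop (nhds xlim) → xlim ∈ MSet flim 2 := by
    intro φ hφ xlim hxl
    -- Step 1: the first argmins along the subsequence converge to x1
    have h1conv : Tendsto (fun k => x1s (φ k)) atTop (nhds x1) := by
      by_contra hcon
      obtain ⟨U, hU, hfreq⟩ := not_tendsto_iff_exists_frequently_notMem.mp hcon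
      obtain ⟨ψ, hψ, hmem⟩ := extraction_of_frequently_atTop hfreq
      obtain ⟨a, ms, hms, hlim⟩ := CompactSpace.tendsto_subseq (fun k => x1s (φ (ψ k)))
      have ha : a = x1 :=
        limit_of_minimizers f flim hrecovery hliminf x1 hsingleton
          (φ ∘ ψ ∘ ms) ((hφ.comp hψ).comp hms) (fun k => x1s (φ (ψ (ms k))))
          (fun k => hx1s _) a hlim
      rw [ha] at hlim
      have hev : ∀ᶠ k in atTop, x1s (φ (ψ (ms k))) ∈ U := hlim hU
      obtain ⟨k, hk⟩ := hev.exists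
      exact hmem (ms k) hk
    -- Step 2: xlim ≠ x1
    have hdistβ : β ≤ dist x1 xlim := by
      have htd : Tendsto (fun k => dist (x1s (φ k)) (x2 (φ k))) atTop
          (nhds (dist x1 xlim)) := h1conv.dist hxl
      exact ge_of_tendsto htd (Eventually.of_forall fun k =>
        (hsep (φ k) _ (hx1s (φ k)) _ (hx2 (φ k))).le)
    have hxlne : xlim ≠ x1 := by
      intro h
      rw [h, dist_self] at hdistβ
      exact absurd (lt_of_lt_of_le hβ hdistβ) (lt_irrefl 0)
    -- Step 3: flim xlim ≤ flim y for every y ≠ x1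
    have key : ∀ y : X, y ≠ x1 → flim xlim ≤ flim y := by
      intro y hy
      obtain ⟨ys, hyst, hysl⟩ := hrecovery y
      have hev : ∀ᶠ k in atTop, ys (φ k) ∉ MSet (f (φ k)) 1 := by
        by_contra hcon
        rw [not_eventually] at hcon
        obtain ⟨ψ, hψ, hψmem⟩ := extraction_of_frequently_atTop
          (hcon.mono fun k hk => not_not.mp hk)
        have := limit_of_minimizers f flim hrecovery hliminf x1 hsingleton
          (φ ∘ ψ) (hφ.comp hψ) (fun k => ys (φ (ψ k))) hψmem y
          (hyst.comp ((hφ.comp hψ).tendsto_atTop))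
        exact hy this
      have hcomp : ∀ᶠ k in atTop, f (φ k) (x2 (φ k)) ≤ f (φ k) (ys (φ k)) := by
        filter_upwards [hev] with k hk
        have h2 := hx2 (φ k)
        rw [MSet_two_eq] at h2
        rw [h2.2]
        have hk' : ys (φ k) ∈ {z | f (φ k) z = ⨅ y, f (φ k) y}ᶜ := by
          rw [← MSet_one_eq]; exact hk
        exact iInf_le (fun w : ↥({z | f (φ k) z = ⨅ y, f (φ k) y}ᶜ) => f (φ k) ↑w) ⟨_, hk'⟩
      calc flim xlim ≤ liminf (fun k => f (φ k) (x2 (φ k))) atTop :=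
            gamma_liminf_subseq f flim hrecovery hliminf φ hφ xlim (fun n => x2 (φ n)) hxl
        _ ≤ liminf (fun k => f (φ k) (ys (φ k))) atTop := liminf_le_liminf hcomp
        _ ≤ limsup (fun k => f (φ k) (ys (φ k))) atTop := liminf_le_limsup
        _ ≤ limsup (fun n => f n (ys n)) atTop := gamma_limsup_subseq f φ hφ ys
        _ ≤ flim y := hysl
    -- Conclusion
    rw [MSet_two_eq]
    rw [Set.mem_setOf_eq, hset]
    constructor
    · refine lt_of_le_of_ne (iInf_le _ _) fun hEq => ?_
      have : xlim ∈ MSet flim 1 := by rw [MSet_one_eq]; exact hEq.symm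
      rw [hsingleton] at this
      exact hxlne this
    · refine le_antisymm (le_iInf ?_) (iInf_le (fun w : ↥(({x1} : Set X)ᶜ) => flim ↑w) ⟨xlim, hxlne⟩)
      rintro ⟨w, hw⟩
      exact key w hw
  exact ⟨main, by
    obtain ⟨a, φ, hφ, ha⟩ := CompactSpace.tendsto_subseq x2
    exact ⟨a, main φ hφ a ha⟩⟩
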